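/- Let G = (N, Δ, π) be an infinite bottleneck congestion game in which every cost function c_f is strictly increasing. Then G has the LIP for the function ν : Δ → ℝ≥0^m defined by ν_f(ξ) = c_f(ℓ_f(ξ)) for all f ∈ F: for every improving move (ξ, (ν_S, ξ_{−S})) of any nonempty coalition S ⊆ N, the vector (c_f(ℓ_f(ν_S, ξ_{−S})))_{f∈F} is strictly sorted-lexicographically smaller than (c_f(ℓ_f(ξ)))_{f∈F}. -/

import Mathlib

/-!
Let `L` be the largest old cost `π_i(ξ)` among the deviating players. If the load on a facility
grows, some player's share on it grows; that player deviates and uses the facility afterwards,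
so its new cost is below `L`. Hence no facility reaches cost `≥ L` unless its cost went down.
On the other hand, a bottleneck facility `g` of the player attaining `L` had cost `L` and now
costs less: if its cost stayed `L`, its load stayed the same while that player left it, so another
player's share grew and the cost would be below `L`. Counting facilities with cost `≥ t` for every
`t ≥ L` then gives the sorted-lexicographic decrease.
-/

open Finset

/-- The vector `a` sorted in non-increasing order. -/
noncomputable def sortDesc {α : Type*} [LinearOrder α] {q : ℕ} (a : Fin q → α) : Fin q → α :=
  fun i => a (Tuple.sort a i.rev)

/-- `a` is strictly sorted-lexicographically smaller than `b`. -/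
def SLexLt {α : Type*} [LinearOrder α] {q : ℕ} (a b : Fin q → α) : Prop :=
  ∃ m : Fin q, (∀ i, i < m → sortDesc a i = sortDesc b i) ∧ sortDesc a m < sortDesc b m

/-- Sorted-lexicographic comparison of vectors indexed by an arbitrary finite type. -/
def SLexLtOn {α : Type*} [LinearOrder α] {ι : Type*} [Fintype ι] (a b : ι → α) : Prop :=
  SLexLt (a ∘ (Fintype.equivFin ι).symm) (b ∘ (Fintype.equivFin ι).symm)

/-- An improving move: some nonempty coalition `S` deviates (players outside `S`
keep their strategies) and every member of `S` strictly decreases her cost. -/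
def ImprovingMove {ι : Type*} {X : ι → Type*} {β : Type*} [Preorder β]
    (π : (∀ i, X i) → ι → β) (x y : ∀ i, X i) : Prop :=
  ∃ S : Finset ι, S.Nonempty ∧ (∀ i ∉ S, y i = x i) ∧ ∀ i ∈ S, π y i < π x i

open scoped NNReal

/-- The load of facility `f` under a splittable strategy profile `ξ`:
the sum of all intensities put on pure strategies containing `f`. -/
noncomputable def facLoad {ι F : Type*} [Fintype ι] [Fintype F] [DecidableEq F] {ni : ι → ℕ}
    (strat : ∀ i, Fin (ni i) → Finset F) (ξ : ∀ i, Fin (ni i) → ℝ≥0) (f : F) : ℝ≥0 :=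
  ∑ i, ∑ j ∈ Finset.univ.filter (fun j => f ∈ strat i j), ξ i j

/-- The set `F_i(ξ)` of facilities used by player `i` under profile `ξ`. -/
noncomputable def usedFac {ι F : Type*} [Fintype F] [DecidableEq F] {ni : ι → ℕ}
    (strat : ∀ i, Fin (ni i) → Finset F) (ξ : ∀ i, Fin (ni i) → ℝ≥0) (i : ι) : Finset F :=
  Finset.univ.filter (fun f => ∃ j, f ∈ strat i j ∧ 0 < ξ i j)

/-- The private (bottleneck) cost `π_i(ξ) = max_{f ∈ F_i(ξ)} c_f(ℓ_f(ξ))` of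
player `i` in an infinite bottleneck congestion game. -/
noncomputable def btlCost {ι F : Type*} [Fintype ι] [Fintype F] [DecidableEq F] {ni : ι → ℕ}
    (c : F → ℝ≥0 → ℝ≥0) (strat : ∀ i, Fin (ni i) → Finset F)
    (ξ : ∀ i, Fin (ni i) → ℝ≥0) (i : ι) : ℝ≥0 :=
  (usedFac strat ξ i).sup (fun f => c f (facLoad strat ξ f))


section SortedLex

variable {α : Type*} [LinearOrder α]

lemma card_filter_comp_equiv {κ ι : Type*} [Fintype κ] [Fintype ι] (e : κ ≃ ι) (p : ι → Prop)
    [DecidablePred p] : #{k | p (e k)} = #{i | p i} :=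
  card_equiv e (by simp)

lemma sortDesc_antitone {q : ℕ} (a : Fin q → α) : Antitone (sortDesc a) :=
  fun _ _ hij => Tuple.monotone_sort a (Fin.rev_le_rev.mpr hij)

lemma card_filter_sortDesc {q : ℕ} (a : Fin q → α) (p : α → Prop) [DecidablePred p] :
    #{i | p (sortDesc a i)} = #{i | p (a i)} :=
  card_filter_comp_equiv (Fin.revPerm.trans (Tuple.sort a)) (fun i => p (a i))

lemma Antitone.le_apply_iff_lt_card {q : ℕ} {A : Fin q → α} (hA : Antitone A) (t : α)
    (i : Fin q) : t ≤ A i ↔ (i : ℕ) < #{j | t ≤ A j} := by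
  constructor
  · intro h
    have hsub : Iic i ⊆ ({j | t ≤ A j} : Finset (Fin q)) := fun j hj =>
      mem_filter.mpr ⟨mem_univ _, h.trans (hA (mem_Iic.mp hj))⟩
    have := card_le_card hsub
    rw [Fin.card_Iic] at this
    omega
  · intro h
    by_contra hc
    have hsub : ({j | t ≤ A j} : Finset (Fin q)) ⊆ Iio i := fun j hj =>
      mem_Iio.mpr (lt_of_not_ge fun hij => hc ((mem_filter.mp hj).2.trans (hA hij)))
    have := card_le_card hsub
    rw [Fin.card_Iio] at this
    omega

lemma Antitone.exists_lex_lt_of_card_filter {q : ℕ} {A B : Fin q → α} (hA : Antitone A)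
    (hB : Antitone B) {L : α} (hle : ∀ t, L ≤ t → #{i | t ≤ A i} ≤ #{i | t ≤ B i})
    (hlt : #{i | L ≤ A i} < #{i | L ≤ B i}) :
    ∃ m, (∀ i < m, A i = B i) ∧ A m < B m := by
  have hne : ({i | A i ≠ B i} : Finset (Fin q)).Nonempty := by
    by_contra h
    have hAB : A = B := funext (by simpa using not_nonempty_iff_eq_empty.mp h)
    exact (hAB ▸ hlt).false
  obtain ⟨m, hm, hmin⟩ := exists_min_image _ id hne
  have hbefore : ∀ i < m, A i = B i := fun i hi =>
    by_contra fun h => (hmin i (by simpa using h)).not_gt hi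
  refine ⟨m, hbefore, (lt_or_gt_of_ne (mem_filter.mp hm).2).resolve_right fun hBA => ?_⟩
  rcases le_or_gt L (A m) with hL | hL
  · -- at level `t = A m`, `A` has more than `m` entries `≥ t` but `B` at most `m`
    have hAm := (hA.le_apply_iff_lt_card (A m) m).mp le_rfl
    have hBm := (hB.le_apply_iff_lt_card (A m) m).not.mp hBA.not_ge
    have := hle _ hL
    omega
  · have heq : ({i | L ≤ A i} : Finset (Fin q)) = ({i | L ≤ B i} : Finset (Fin q)) := by
      refine filter_congr fun i _ => ?_
      rcases lt_or_ge i m with hi | hi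
      · rw [hbefore i hi]
      · exact iff_of_false ((hA hi).trans_lt hL).not_ge ((hB hi).trans_lt (hBA.trans hL)).not_ge
    exact (heq ▸ hlt).false

lemma slexLt_of_card_filter {q : ℕ} {a b : Fin q → α} {L : α}
    (hle : ∀ t, L ≤ t → #{i | t ≤ a i} ≤ #{i | t ≤ b i})
    (hlt : #{i | L ≤ a i} < #{i | L ≤ b i}) : SLexLt a b :=
  (sortDesc_antitone a).exists_lex_lt_of_card_filter (sortDesc_antitone b)
    (fun t ht => (card_filter_sortDesc a (t ≤ ·)).trans_le
      ((hle t ht).trans_eq (card_filter_sortDesc b (t ≤ ·)).symm))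
    ((card_filter_sortDesc a (L ≤ ·)).trans_lt
      (hlt.trans_eq (card_filter_sortDesc b (L ≤ ·)).symm))

theorem slexLtOn_of_le_of_lt {κ : Type*} [Fintype κ] {a b : κ → α} {L : α}
    (hle : ∀ f, L ≤ a f → a f ≤ b f) {g : κ} (hag : a g < L) (hbg : L ≤ b g) : SLexLtOn a b := by
  have hsub (t : α) (ht : L ≤ t) :
      ({f | t ≤ a f} : Finset κ) ⊆ ({f | t ≤ b f} : Finset κ) := fun f hf => by
    simp only [mem_filter, mem_univ, true_and] at hf ⊢
    exact hf.trans (hle f (ht.trans hf))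
  have hssub : ({f | L ≤ a f} : Finset κ) ⊂ ({f | L ≤ b f} : Finset κ) :=
    (ssubset_iff_of_subset (hsub L le_rfl)).mpr ⟨g, by simpa using hbg, by simpa using hag⟩
  have hcard (t : α) (c : κ → α) :
      #{i | t ≤ (c ∘ (Fintype.equivFin κ).symm) i} = #{f | t ≤ c f} :=
    card_filter_comp_equiv _ (t ≤ c ·)
  refine slexLt_of_card_filter (L := L) (fun t ht => ?_) ?_
  · rw [hcard, hcard]
    exact card_le_card (hsub t ht)
  · rw [hcard, hcard]
    exact card_lt_card hssub

end SortedLex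

section BottleneckGame

variable {ι F : Type*} [Fintype F] [DecidableEq F] {ni : ι → ℕ}
  {strat : ∀ i, Fin (ni i) → Finset F} {c : F → ℝ≥0 → ℝ≥0}
  {ζ ξ ν : ∀ i, Fin (ni i) → ℝ≥0} {S : Finset ι} {L : ℝ≥0}

variable (strat) in
noncomputable def playerLoad (ζ : ∀ i, Fin (ni i) → ℝ≥0) (i : ι) (f : F) : ℝ≥0 :=
  ∑ j ∈ univ.filter (fun j => f ∈ strat i j), ζ i j

lemma mem_usedFac_iff_playerLoad_pos {i : ι} {f : F} :
    f ∈ usedFac strat ζ i ↔ 0 < playerLoad strat ζ i f := by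
  simp [usedFac, playerLoad, sum_pos_iff]

variable [Fintype ι]

lemma cost_le_btlCost {i : ι} {f : F} (hf : f ∈ usedFac strat ζ i) :
    c f (facLoad strat ζ f) ≤ btlCost c strat ζ i :=
  le_sup (f := fun f => c f (facLoad strat ζ f)) hf

lemma exists_cost_eq_btlCost {i : ι} (h : 0 < btlCost c strat ζ i) :
    ∃ f ∈ usedFac strat ζ i, c f (facLoad strat ζ f) = btlCost c strat ζ i :=
  let ⟨f, hf, _⟩ := Finset.lt_sup_iff.mp h
  let ⟨g, hg, hgc⟩ := exists_mem_eq_sup _ ⟨f, hf⟩ (fun f => c f (facLoad strat ζ f))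
  ⟨g, hg, hgc.symm⟩

lemma cost_lt_of_playerLoad_lt (hkeep : ∀ i ∉ S, ν i = ξ i)
    (hS : ∀ i ∈ S, btlCost c strat ν i < L) {i : ι} {f : F}
    (h : playerLoad strat ξ i f < playerLoad strat ν i f) : c f (facLoad strat ν f) < L := by
  have hi : i ∈ S := by
    by_contra hi
    simp [playerLoad, hkeep i hi] at h
  have hf : f ∈ usedFac strat ν i := mem_usedFac_iff_playerLoad_pos.mpr (pos_of_gt h)
  exact (cost_le_btlCost hf).trans_lt (hS i hi)

lemma cost_lt_of_cost_lt {f : F} (hc : Monotone (c f)) (hkeep : ∀ i ∉ S, ν i = ξ i)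
    (hS : ∀ i ∈ S, btlCost c strat ν i < L)
    (h : c f (facLoad strat ξ f) < c f (facLoad strat ν f)) : c f (facLoad strat ν f) < L :=
  let ⟨_, _, hi⟩ := exists_lt_of_sum_lt (hc.reflect_lt h)
  cost_lt_of_playerLoad_lt hkeep hS hi

lemma cost_lt_of_bottleneck {g : F} (hc : StrictMono (c g)) (hkeep : ∀ i ∉ S, ν i = ξ i)
    (hS : ∀ i ∈ S, btlCost c strat ν i < L) {i₀ : ι} (hi₀ : i₀ ∈ S)
    (hg : g ∈ usedFac strat ξ i₀) (hgL : c g (facLoad strat ξ g) = L) :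
    c g (facLoad strat ν g) < L := by
  rcases lt_trichotomy (c g (facLoad strat ν g)) L with h | h | h
  · exact h
  · have hload : facLoad strat ν g = facLoad strat ξ g := hc.injective (h.trans hgL.symm)
    have hleft : playerLoad strat ν i₀ g = 0 := by
      by_contra hpos
      have hg' := mem_usedFac_iff_playerLoad_pos.mpr (pos_iff_ne_zero.mpr hpos)
      exact ((cost_le_btlCost hg').trans_lt (hS i₀ hi₀)).ne h
    obtain ⟨i, hi⟩ : ∃ i, playerLoad strat ξ i g < playerLoad strat ν i g := by
      by_contra! hle
      refine (sum_lt_sum (fun i _ => hle i) ⟨i₀, mem_univ _, ?_⟩).ne hload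
      exact hleft ▸ mem_usedFac_iff_playerLoad_pos.mp hg
    exact cost_lt_of_playerLoad_lt hkeep hS hi
  · exact absurd (cost_lt_of_cost_lt hc.monotone hkeep hS (hgL ▸ h)) h.not_gt

end BottleneckGame

theorem stmt_16_general {ι F : Type*} [Fintype ι] [Fintype F] [DecidableEq F] {ni : ι → ℕ}
    (strat : ∀ i, Fin (ni i) → Finset F) (d : ι → ℝ≥0)
    (c : F → ℝ≥0 → ℝ≥0) (hc : ∀ f, StrictMono (c f)) :
    ∀ ξ ν : ∀ i, Fin (ni i) → ℝ≥0,
      (∀ i, ∑ j, ξ i j = d i) → (∀ i, ∑ j, ν i j = d i) →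
      ImprovingMove (btlCost c strat) ξ ν →
      SLexLtOn (fun f => c f (facLoad strat ν f)) (fun f => c f (facLoad strat ξ f)) := by
  rintro ξ ν - - ⟨S, hSne, hkeep, himp⟩
  obtain ⟨i₀, hi₀, hL⟩ := exists_mem_eq_sup' hSne (btlCost c strat ξ)
  set L := S.sup' hSne (btlCost c strat ξ)
  have hS : ∀ i ∈ S, btlCost c strat ν i < L := fun i hi => (himp i hi).trans_le (le_sup' _ hi)
  obtain ⟨g, hg, hgL⟩ := exists_cost_eq_btlCost (zero_le.trans_lt (himp i₀ hi₀))
  rw [← hL] at hgL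
  refine slexLtOn_of_le_of_lt (L := L) (fun f hf => ?_)
    (cost_lt_of_bottleneck (hc g) hkeep hS hi₀ hg hgL) hgL.ge
  exact le_of_not_gt fun h => (cost_lt_of_cost_lt (hc f).monotone hkeep hS h).not_ge hf

/-- An infinite bottleneck congestion game with strictly
increasing facility cost functions has the LIP for the function
`ν_f(ξ) = c_f(ℓ_f(ξ))`. -/
theorem stmt_16 {ι F : Type*} [Fintype ι] [Nonempty ι] [Fintype F] [Nonempty F]
    [DecidableEq F] {ni : ι → ℕ} (hni : ∀ i, 0 < ni i)
    (strat : ∀ i, Fin (ni i) → Finset F) (hstrat : ∀ i j, (strat i j).Nonempty)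
    (d : ι → ℝ≥0) (hd : ∀ i, 0 < d i)
    (c : F → ℝ≥0 → ℝ≥0) (hc : ∀ f, StrictMono (c f)) :
    ∀ ξ ν : ∀ i, Fin (ni i) → ℝ≥0,
      (∀ i, ∑ j, ξ i j = d i) → (∀ i, ∑ j, ν i j = d i) →
      ImprovingMove (btlCost c strat) ξ ν →
      SLexLtOn (fun f => c f (facLoad strat ν f)) (fun f => c f (facLoad strat ξ f)) :=
  stmt_16_general strat d c hc
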